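/- Incremental bound on the candidate activation (intermediate claim in the proof of Theorem 2): fix λ̌ ≥ 1 and set σ̌_f = σ(‖[W_f λ̌U_f b_f]‖_∞). Let r(u,x) = tanh(W_r u + U_r (f(u,x) ∘ x) + b_r) with f(u,x) = σ(W_f u + U_f x + b_f). Then for all u_a, u_b ∈ ℝ^{n_u} with ‖u_a‖_∞ ≤ 1 and ‖u_b‖_∞ ≤ 1 and all x_a, x_b ∈ ℝ^{n_x} with ‖x_a‖_∞ ≤ λ̌ and ‖x_b‖_∞ ≤ λ̌, it holds that ‖r(u_a,x_a) − r(u_b,x_b)‖_∞ ≤ ‖W_r‖_∞ ‖u_a − u_b‖_∞ + ‖U_r‖_∞ ( (1/4) λ̌ ‖W_f‖_∞ ‖u_a − u_b‖_∞ + (1/4) λ̌ ‖U_f‖_∞ ‖x_a − x_b‖_∞ + σ̌_f ‖x_a − x_b‖_∞ ). -/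

import Mathlib

/-!
Both activations are Lipschitz: `tanh` with constant `1` and `σ` with constant `1/4`, since
`σ' = σ (1 - σ) ≤ 1/4`. The gate difference splits as
`(σ(s_a) - σ(s_b)) ∘ x_a + σ(s_b) ∘ (x_a - x_b)` with `s = W_f u + U_f x + b_f`. The first term
is at most `(1/4) ‖s_a - s_b‖_∞ λ̌`; for the second, every entry of `s_b` is bounded by a row sum
of `[W_f λ̌U_f b_f]` because `‖u_b‖_∞ ≤ 1` and `‖x_b‖_∞ ≤ λ̌`, so monotonicity of `σ` gives
`σ(s_b) ≤ σ̌_f` componentwise.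
-/

open Real

/-- The sigmoid activation function. -/
noncomputable def sigmoid (s : ℝ) : ℝ := 1 / (1 + Real.exp (-s))

/-- Induced infinity norm of a matrix (maximum absolute row sum). -/
noncomputable def matNorm {n m : ℕ} (A : Matrix (Fin n) (Fin m) ℝ) : ℝ :=
  ⨆ i, ∑ j, |A i j|

/-- Infinity norm of the horizontal concatenation `[A B c]`. -/
noncomputable def catNorm {n m p : ℕ} (A : Matrix (Fin n) (Fin m) ℝ)
    (B : Matrix (Fin n) (Fin p) ℝ) (c : Fin n → ℝ) : ℝ :=
  ⨆ i, (∑ j, |A i j| + ∑ j, |B i j| + |c i|)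

open scoped NNReal Matrix

namespace Real

theorem hasDerivAt_tanh (x : ℝ) : HasDerivAt tanh (1 / cosh x ^ 2) x := by
  have h := (hasDerivAt_sinh x).div (hasDerivAt_cosh x) (cosh_pos x).ne'
  rw [show cosh x * cosh x - sinh x * sinh x = 1 by nlinarith [cosh_sq_sub_sinh_sq x]] at h
  rwa [show tanh = sinh / cosh from funext tanh_eq_sinh_div_cosh]

theorem lipschitzWith_tanh : LipschitzWith 1 tanh := by
  refine lipschitzWith_of_nnnorm_deriv_le (fun x => (hasDerivAt_tanh x).differentiableAt)
    fun x => ?_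
  rw [(hasDerivAt_tanh x).deriv, ← NNReal.coe_le_coe, coe_nnnorm, norm_of_nonneg (by positivity),
    NNReal.coe_one, div_le_one (by positivity)]
  nlinarith [one_le_cosh x]

theorem lipschitzWith_sigmoid : LipschitzWith 4⁻¹ sigmoid := by
  refine lipschitzWith_of_nnnorm_deriv_le differentiable_sigmoid fun x => ?_
  have h0 := sigmoid_pos x
  have h1 := sigmoid_lt_one x
  rw [deriv_sigmoid, ← NNReal.coe_le_coe, coe_nnnorm, norm_of_nonneg (by nlinarith),
    NNReal.coe_inv, NNReal.coe_ofNat]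
  nlinarith [sq_nonneg (sigmoid x - 2⁻¹)]

end Real

theorem sigmoid_eq_real_sigmoid : _root_.sigmoid = Real.sigmoid :=
  funext fun _ => one_div _

theorem LipschitzWith.norm_comp_sub_comp_le {ι E F : Type*} [Fintype ι]
    [SeminormedAddCommGroup E] [SeminormedAddCommGroup F] {φ : E → F} {K : ℝ≥0}
    (hφ : LipschitzWith K φ) (v w : ι → E) :
    ‖(fun i => φ (v i)) - fun i => φ (w i)‖ ≤ K * ‖v - w‖ :=
  (pi_norm_le_iff_of_nonneg (by positivity)).2 fun i =>
    (hφ.norm_sub_le (v i) (w i)).trans (by gcongr; exact norm_le_pi_norm (v - w) i)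

theorem norm_mul_sub_mul_le {R : Type*} [NonUnitalSeminormedRing R] (a b x y : R) :
    ‖a * x - b * y‖ ≤ ‖a - b‖ * ‖x‖ + ‖b‖ * ‖x - y‖ := by
  rw [show a * x - b * y = (a - b) * x + b * (x - y) by noncomm_ring]
  exact (norm_add_le _ _).trans (add_le_add (norm_mul_le _ _) (norm_mul_le _ _))

theorem norm_comp_sigmoid_le {ι : Type*} [Fintype ι] {s : ι → ℝ} {M : ℝ} (hs : ∀ i, |s i| ≤ M) :
    ‖fun i => Real.sigmoid (s i)‖ ≤ Real.sigmoid M :=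
  (pi_norm_le_iff_of_nonneg (sigmoid_nonneg M)).2 fun i => by
    rw [norm_of_nonneg (sigmoid_nonneg _)]
    exact sigmoid_monotone ((le_abs_self _).trans (hs i))

section MatrixNorms

variable {n m p : ℕ}

theorem abs_mulVec_apply_le (A : Matrix (Fin n) (Fin m) ℝ) (v : Fin m → ℝ) (i : Fin n) :
    |(A *ᵥ v) i| ≤ (∑ j, |A i j|) * ‖v‖ := by
  rw [Matrix.mulVec, dotProduct, Finset.sum_mul]
  refine (Finset.abs_sum_le_sum_abs _ _).trans (Finset.sum_le_sum fun j _ => ?_)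
  rw [abs_mul]
  gcongr
  exact norm_le_pi_norm v j

theorem sum_abs_le_matNorm (A : Matrix (Fin n) (Fin m) ℝ) (i : Fin n) :
    ∑ j, |A i j| ≤ matNorm A :=
  le_ciSup (f := fun i => ∑ j, |A i j|) (Set.finite_range _).bddAbove i

theorem matNorm_nonneg (A : Matrix (Fin n) (Fin m) ℝ) : 0 ≤ matNorm A :=
  Real.iSup_nonneg fun _ => Finset.sum_nonneg fun _ _ => abs_nonneg _

theorem norm_mulVec_le (A : Matrix (Fin n) (Fin m) ℝ) (v : Fin m → ℝ) :
    ‖A *ᵥ v‖ ≤ matNorm A * ‖v‖ :=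
  (pi_norm_le_iff_of_nonneg (by have := matNorm_nonneg A; positivity)).2 fun i =>
    (abs_mulVec_apply_le A v i).trans (by gcongr; exact sum_abs_le_matNorm A i)

theorem norm_affine_sub_affine_le (A : Matrix (Fin n) (Fin m) ℝ) (B : Matrix (Fin n) (Fin p) ℝ)
    (c : Fin n → ℝ) (u u' : Fin m → ℝ) (x x' : Fin p → ℝ) :
    ‖(A *ᵥ u + B *ᵥ x + c) - (A *ᵥ u' + B *ᵥ x' + c)‖ ≤
      matNorm A * ‖u - u'‖ + matNorm B * ‖x - x'‖ := by
  rw [show A *ᵥ u + B *ᵥ x + c - (A *ᵥ u' + B *ᵥ x' + c) = A *ᵥ (u - u') + B *ᵥ (x - x') by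
    simp only [Matrix.mulVec_sub]; abel]
  exact (norm_add_le _ _).trans (add_le_add (norm_mulVec_le A _) (norm_mulVec_le B _))

theorem abs_affine_apply_le_catNorm (A : Matrix (Fin n) (Fin m) ℝ) (B : Matrix (Fin n) (Fin p) ℝ)
    (c : Fin n → ℝ) {u : Fin m → ℝ} {x : Fin p → ℝ} {lam : ℝ} (hu : ‖u‖ ≤ 1) (hx : ‖x‖ ≤ lam)
    (i : Fin n) : |(A *ᵥ u + B *ᵥ x + c) i| ≤ catNorm A (lam • B) c := by
  have hlam : 0 ≤ lam := (norm_nonneg x).trans hx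
  have hA : |(A *ᵥ u) i| ≤ ∑ j, |A i j| :=
    (abs_mulVec_apply_le A u i).trans (mul_le_of_le_one_right (by positivity) hu)
  have hB : |(B *ᵥ x) i| ≤ ∑ j, |(lam • B) i j| := by
    simp only [Matrix.smul_apply, smul_eq_mul, abs_mul, abs_of_nonneg hlam, ← Finset.mul_sum]
    exact (abs_mulVec_apply_le B x i).trans (by rw [mul_comm]; gcongr)
  refine le_trans ?_ (le_ciSup (f := fun i => ∑ j, |A i j| + ∑ j, |(lam • B) i j| + |c i|)
    (Set.finite_range _).bddAbove i)
  simp only [Pi.add_apply]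
  exact (abs_add_le _ _).trans (add_le_add_left ((abs_add_le _ _).trans (add_le_add hA hB)) _)

end MatrixNorms

theorem gru_candidate_activation_incremental_bound_general {nu nx : ℕ}
    (Wf Wr : Matrix (Fin nx) (Fin nu) ℝ) (Uf Ur : Matrix (Fin nx) (Fin nx) ℝ)
    (bf br : Fin nx → ℝ)
    (lam : ℝ)
    (ua ub : Fin nu → ℝ) (hub : ‖ub‖ ≤ 1)
    (xa xb : Fin nx → ℝ) (hxa : ‖xa‖ ≤ lam) (hxb : ‖xb‖ ≤ lam) :
    ‖(fun i => Real.tanh ((Wr.mulVec ua +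
          Ur.mulVec ((fun j => _root_.sigmoid ((Wf.mulVec ua + Uf.mulVec xa + bf) j)) * xa) +
          br) i)) -
        (fun i => Real.tanh ((Wr.mulVec ub +
          Ur.mulVec ((fun j => _root_.sigmoid ((Wf.mulVec ub + Uf.mulVec xb + bf) j)) * xb) +
          br) i))‖ ≤
      matNorm Wr * ‖ua - ub‖ +
        matNorm Ur * ((1 / 4) * lam * matNorm Wf * ‖ua - ub‖ +
          (1 / 4) * lam * matNorm Uf * ‖xa - xb‖ +
          _root_.sigmoid (catNorm Wf (lam • Uf) bf) * ‖xa - xb‖) := by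
  rw [sigmoid_eq_real_sigmoid]
  set sa := Wf *ᵥ ua + Uf *ᵥ xa + bf
  set sb := Wf *ᵥ ub + Uf *ᵥ xb + bf
  set σc := Real.sigmoid (catNorm Wf (lam • Uf) bf)
  have hs : ‖sa - sb‖ ≤ matNorm Wf * ‖ua - ub‖ + matNorm Uf * ‖xa - xb‖ :=
    norm_affine_sub_affine_le Wf Uf bf ua ub xa xb
  have hσs :
      ‖(fun j => Real.sigmoid (sa j)) - fun j => Real.sigmoid (sb j)‖ ≤ 4⁻¹ * ‖sa - sb‖ := by
    simpa using lipschitzWith_sigmoid.norm_comp_sub_comp_le sa sb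
  have hσb : ‖fun j => Real.sigmoid (sb j)‖ ≤ σc :=
    norm_comp_sigmoid_le (abs_affine_apply_le_catNorm Wf Uf bf hub hxb)
  have hgate : ‖(fun j => Real.sigmoid (sa j)) * xa - (fun j => Real.sigmoid (sb j)) * xb‖ ≤
      (1 / 4) * lam * matNorm Wf * ‖ua - ub‖ + (1 / 4) * lam * matNorm Uf * ‖xa - xb‖ +
        σc * ‖xa - xb‖ := by
    refine (norm_mul_sub_mul_le _ _ _ _).trans ?_
    calc _ ≤ 4⁻¹ * (matNorm Wf * ‖ua - ub‖ + matNorm Uf * ‖xa - xb‖) * lam +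
          σc * ‖xa - xb‖ := by
          have := matNorm_nonneg Wf
          have := matNorm_nonneg Uf
          gcongr
          exact hσs.trans (by gcongr)
      _ = _ := by ring
  calc _ ≤ ‖(Wr *ᵥ ua + Ur *ᵥ ((fun j => Real.sigmoid (sa j)) * xa) + br) -
          (Wr *ᵥ ub + Ur *ᵥ ((fun j => Real.sigmoid (sb j)) * xb) + br)‖ := by
        simpa using lipschitzWith_tanh.norm_comp_sub_comp_le
          (Wr *ᵥ ua + Ur *ᵥ ((fun j => Real.sigmoid (sa j)) * xa) + br)
          (Wr *ᵥ ub + Ur *ᵥ ((fun j => Real.sigmoid (sb j)) * xb) + br)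
    _ ≤ _ :=
        (norm_affine_sub_affine_le Wr Ur br _ _ _ _).trans (by gcongr; exact matNorm_nonneg Ur)

/-- **Incremental bound on the candidate activation (proof of Theorem 2).**
For `r(u,x) = tanh(W_r u + U_r (f(u,x) ∘ x) + b_r)`, `f(u,x) = σ(W_f u + U_f x + b_f)`,
`σ̌_f = σ(‖[W_f λ̌U_f b_f]‖_∞)`, with `‖u_{a,b}‖_∞ ≤ 1` and `‖x_{a,b}‖_∞ ≤ λ̌`:
`‖r(u_a,x_a) - r(u_b,x_b)‖_∞ ≤ ‖W_r‖_∞ ‖u_a - u_b‖_∞ +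
  ‖U_r‖_∞ ((1/4) λ̌ ‖W_f‖_∞ ‖u_a - u_b‖_∞ + (1/4) λ̌ ‖U_f‖_∞ ‖x_a - x_b‖_∞ +
    σ̌_f ‖x_a - x_b‖_∞)`. -/
theorem gru_candidate_activation_incremental_bound {nu nx : ℕ}
    (Wf Wr : Matrix (Fin nx) (Fin nu) ℝ) (Uf Ur : Matrix (Fin nx) (Fin nx) ℝ)
    (bf br : Fin nx → ℝ)
    (lam : ℝ) (hlam : 1 ≤ lam)
    (ua ub : Fin nu → ℝ) (hua : ‖ua‖ ≤ 1) (hub : ‖ub‖ ≤ 1)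
    (xa xb : Fin nx → ℝ) (hxa : ‖xa‖ ≤ lam) (hxb : ‖xb‖ ≤ lam) :
    ‖(fun i => Real.tanh ((Wr.mulVec ua +
          Ur.mulVec ((fun j => _root_.sigmoid ((Wf.mulVec ua + Uf.mulVec xa + bf) j)) * xa) +
          br) i)) -
        (fun i => Real.tanh ((Wr.mulVec ub +
          Ur.mulVec ((fun j => _root_.sigmoid ((Wf.mulVec ub + Uf.mulVec xb + bf) j)) * xb) +
          br) i))‖ ≤
      matNorm Wr * ‖ua - ub‖ +
        matNorm Ur * ((1 / 4) * lam * matNorm Wf * ‖ua - ub‖ +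
          (1 / 4) * lam * matNorm Uf * ‖xa - xb‖ +
          _root_.sigmoid (catNorm Wf (lam • Uf) bf) * ‖xa - xb‖) :=
  gru_candidate_activation_incremental_bound_general Wf Wr Uf Ur bf br lam ua ub hub xa xb hxa hxb
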